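/- arXiv:2006.16602 — 2 statements merged into one kernel-verified Lean document; each statement's English description precedes it below -/
import Mathlib

section
/- Let M be a metric space and f : M → M a homeomorphism. Let (K, j, h) be a weak Denjoy sub-system for f with rotation number α = ρ(h) ∈ 𝕋. Then for every ε > 0 there exists δ > 0 such that for every weak Denjoy sub-system (K₁, j₁, h₁) for f with rotation number α₁ = ρ(h₁): if the Hausdorff distance between j₁(K₁) and j(K) is less than δ, and the Hausdorff distance (in M³ with the sup-product metric) between G(K₁, j₁) and G(K, j) is less than δ or the Hausdorff distance between G(K₁, j₁)⁻ and G(K, j) is less than δ, then dist(α₁, α) < ε or dist(α₁, −α) < ε (distance on 𝕋 = ℝ/ℤ). -/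
/-!
Normalise the lift of a Denjoy example so that its translation number is `β = fract ρ ∈ (0, 1)`.
Along an orbit `x₀, x₁, …` the base point `x₀` lies on the arc from `xᵢ₊₁` to `xᵢ₊₂` exactly when
the lift crosses an integer, so for `i < N` this happens `⌊(N + 1) β⌋` times (`β` is irrational).
These incidences are read off the cyclic order of the orbit points.

If `W₁` is close to `W`, continuity of `f` gives an orbit of `W₁` whose image shadows the first
`N + 2` points of an orbit of `W`. The order graph of `W` is closed and `j` is injective, so a
triple of orbit points of `W` that is not cyclically ordered stays away from it; Hausdorff-closeness
of the order graphs (or of the reversed one) then forces the two configurations to have the same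
(or the reversed) cyclic order. Hence `⌊(N + 1) β₁⌋` equals `⌊(N + 1) β⌋` (or
`N - ⌊(N + 1) β⌋ = ⌊(N + 1) fract (-ρ)⌋`), so `β₁` is within `1 / (N + 1)` of `β` (or of `-ρ`).
-/

open Filter Topology Set

noncomputable section

/-- A Denjoy example: an orientation-preserving circle homeomorphism with
irrational rotation number together with its minimal invariant Cantor set. -/
structure DenjoySystem where
  /-- the circle homeomorphism -/
  h : UnitAddCircle ≃ₜ UnitAddCircle
  /-- the minimal set -/
  K : Set UnitAddCircle
  /-- a lift of `h` to `ℝ` -/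
  lift : ℝ → ℝ
  lift_mono : StrictMono lift
  lift_cont : Continuous lift
  lift_bij : Function.Bijective lift
  lift_add : ∀ x : ℝ, lift (x + 1) = lift x + 1
  lift_proj : ∀ x : ℝ, ((lift x : ℝ) : UnitAddCircle) = h (x : UnitAddCircle)
  /-- a representative of the rotation number -/
  rot : ℝ
  rot_lim : Filter.Tendsto (fun n : ℕ => lift^[n] 0 / (n : ℝ)) Filter.atTop (nhds rot)
  rot_irr : Irrational rot
  K_ne : K.Nonempty
  K_cpt : IsCompact K
  K_proper : K ≠ Set.univ
  K_inv : h '' K = K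
  K_perf : Perfect K
  K_td : IsTotallyDisconnected K
  K_min : ∀ x ∈ K, ∀ y ∈ K, y ∈ closure {z | ∃ n : ℤ, (h.toEquiv ^ n) x = z}

/-- A weak Denjoy sub-system (WDS) for a map `f : M → M`. -/
structure WDS (M : Type*) [TopologicalSpace M] (f : M → M) extends DenjoySystem where
  /-- the embedding of the minimal set into `M` -/
  j : K → M
  j_emb : Topology.IsEmbedding j
  range_inv : f '' Set.range j = Set.range j
  equivar : ∀ x y : K, h (x : UnitAddCircle) = (y : UnitAddCircle) → j y = f (j x)

/-- Weak cyclic order on the circle. -/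
def CircBtw (a b c : UnitAddCircle) : Prop :=
  ∃ x y z : ℝ, (x : UnitAddCircle) = a ∧ (y : UnitAddCircle) = b ∧ (z : UnitAddCircle) = c ∧
    x ≤ y ∧ y ≤ z ∧ z ≤ x + 1

/-- The order graph of a WDS. -/
def WDS.orderGraph {M : Type*} [TopologicalSpace M] {f : M → M} (W : WDS M f) :
    Set (M × M × M) :=
  {p | ∃ a b c : W.K, CircBtw (a : UnitAddCircle) (b : UnitAddCircle) (c : UnitAddCircle) ∧ p = (W.j a, W.j b, W.j c)}

/-- The reverse of the order graph of a WDS. -/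
def WDS.revGraph {M : Type*} [TopologicalSpace M] {f : M → M} (W : WDS M f) :
    Set (M × M × M) :=
  {p | (p.2.2, p.2.1, p.1) ∈ W.orderGraph}

local notation "𝕋" => UnitAddCircle

section CircularOrder

variable {α : Type*} [CircularOrder α]

theorem btw_iff_btw_of_imp {a b c a' b' c' : α} (h : btw a' b' c' → btw a b c)
    (h' : btw c' b' a' → btw c b a) (hab : a ≠ b) (hbc : b ≠ c) (hca : c ≠ a) :
    btw a' b' c' ↔ btw a b c := by
  refine ⟨h, fun habc => by_contra fun hn => ?_⟩
  rcases btw_antisymm habc (h' ((btw_total a' b' c').resolve_left hn)) with h | h | h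
  exacts [hab h, hbc h, hca h]

theorem btw_swap_iff_not_btw {a b c : α} (hab : a ≠ b) (hbc : b ≠ c) (hca : c ≠ a) :
    btw c b a ↔ ¬btw a b c := by
  refine ⟨fun hcba habc => ?_, (btw_total a b c).resolve_left⟩
  rcases btw_antisymm habc hcba with h | h | h
  exacts [hab h, hbc h, hca h]

open Classical in
/-- For an orbit `p` of a circle map, this is the number of full turns made between `p 1` and
`p (N + 1)`, which is why it approximates `(N + 1)` times the rotation number. -/
def crossCount (p : ℕ → α) (N : ℕ) : ℕ :=
  ((Finset.range N).filter fun i => btw (p (i + 1)) (p 0) (p (i + 2))).card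

theorem crossCount_eq_card_filter {p : ℕ → α} {N : ℕ} {P : ℕ → Prop} [DecidablePred P]
    (h : ∀ i < N, btw (p (i + 1)) (p 0) (p (i + 2)) ↔ P i) :
    crossCount p N = ((Finset.range N).filter P).card := by
  unfold crossCount
  congr 1
  ext i
  simp only [Finset.mem_filter, Finset.mem_range]
  exact and_congr_right (h i)

theorem crossCount_eq_of_btw_imp {p q : ℕ → α} (hp : Function.Injective p) {N : ℕ}
    (h : ∀ a ≤ N + 1, ∀ b ≤ N + 1, ∀ c ≤ N + 1, btw (q a) (q b) (q c) → btw (p a) (p b) (p c)) :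
    crossCount q N = crossCount p N := by
  classical
  exact crossCount_eq_card_filter fun i hi =>
    btw_iff_btw_of_imp (h _ (by omega) _ (by omega) _ (by omega))
      (h _ (by omega) _ (by omega) _ (by omega))
      (hp.ne (by omega)) (hp.ne (by omega)) (hp.ne (by omega))

theorem crossCount_add_crossCount_of_btw_imp_swap {p q : ℕ → α} (hp : Function.Injective p)
    {N : ℕ}
    (h : ∀ a ≤ N + 1, ∀ b ≤ N + 1, ∀ c ≤ N + 1, btw (q a) (q b) (q c) → btw (p c) (p b) (p a)) :
    crossCount q N + crossCount p N = N := by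
  classical
  have hswap : ∀ i < N, btw (q (i + 1)) (q 0) (q (i + 2)) ↔
      ¬btw (p (i + 1)) (p 0) (p (i + 2)) := fun i hi => by
    have hp₁ : p (i + 1) ≠ p 0 := hp.ne (by omega)
    have hp₂ : p 0 ≠ p (i + 2) := hp.ne (by omega)
    have hp₃ : p (i + 2) ≠ p (i + 1) := hp.ne (by omega)
    rw [← btw_swap_iff_not_btw hp₁ hp₂ hp₃]
    exact btw_iff_btw_of_imp (h _ (by omega) _ (by omega) _ (by omega))
      (h _ (by omega) _ (by omega) _ (by omega)) hp₂.symm hp₁.symm hp₃.symm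
  rw [crossCount_eq_card_filter hswap, add_comm, crossCount,
    Finset.card_filter_add_card_filter_not, Finset.card_range]

end CircularOrder

namespace UnitAddCircle

theorem coe_eq_coe_iff {a b : ℝ} : (a : 𝕋) = b ↔ ∃ m : ℤ, b = a + m := by
  rw [QuotientAddGroup.eq, AddSubgroup.mem_zmultiples_iff]
  simp only [zsmul_one]
  exact exists_congr fun m => by constructor <;> intro h <;> linarith

theorem dist_coe_le (a b : ℝ) : dist (a : 𝕋) (b : 𝕋) ≤ |a - b| := by
  rw [dist_eq_norm, ← AddCircle.coe_sub, norm_eq]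
  simpa using round_le (a - b) 0

theorem coe_toIcoMod (a b : ℝ) : ((toIcoMod zero_lt_one a b : ℝ) : 𝕋) = b := by
  rw [toIcoMod, sub_eq_add_neg, ← neg_zsmul, zsmul_one]
  simp

theorem coe_toIocMod (a b : ℝ) : ((toIocMod zero_lt_one a b : ℝ) : 𝕋) = b := by
  rw [toIocMod, sub_eq_add_neg, ← neg_zsmul, zsmul_one]
  simp

theorem btw_coe_iff_exists_int {u v w : ℝ} (huv : u < v) (hvu : v < u + 1) :
    btw (u : 𝕋) (w : 𝕋) (v : 𝕋) ↔ ∃ k : ℤ, u ≤ w + k ∧ w + k ≤ v := by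
  rw [QuotientAddGroup.btw_coe_iff, (toIocMod_eq_self _).2 ⟨huv, hvu.le⟩]
  constructor
  · intro h
    have hmod : toIcoMod zero_lt_one u w = w + (-toIcoDiv zero_lt_one u w : ℤ) := by
      rw [← sub_eq_iff_eq_add', toIcoMod_sub_self, zsmul_one]
    exact ⟨_, hmod ▸ left_le_toIcoMod _ _ _, hmod ▸ h⟩
  · rintro ⟨k, hk₁, hk₂⟩
    rwa [(toIcoMod_eq_iff _).2 ⟨⟨hk₁, by linarith⟩, -k, by simp⟩]

end UnitAddCircle

theorem circBtw_iff_btw {a b c : 𝕋} : CircBtw a b c ↔ btw a b c := by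
  constructor
  · rintro ⟨x, y, z, rfl, rfl, rfl, hxy, hyz, hzx⟩
    rw [QuotientAddGroup.btw_coe_iff]
    calc toIcoMod _ x y ≤ y := by
          rcases eq_or_lt_of_le (hyz.trans hzx) with rfl | hlt
          · rw [toIcoMod_apply_right]; linarith
          · rw [(toIcoMod_eq_self _).2 ⟨hxy, hlt⟩]
      _ ≤ z := hyz
      _ ≤ toIocMod _ x z := by
          rcases eq_or_lt_of_le (hxy.trans hyz) with rfl | hlt
          · rw [toIocMod_apply_left]; linarith
          · rw [(toIocMod_eq_self _).2 ⟨hlt, hzx⟩]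
  · induction a using QuotientAddGroup.induction_on with | H x => ?_
    induction b using QuotientAddGroup.induction_on with | H y => ?_
    induction c using QuotientAddGroup.induction_on with | H z => ?_
    rw [QuotientAddGroup.btw_coe_iff]
    intro h
    exact ⟨x, _, _, rfl, UnitAddCircle.coe_toIcoMod x y, UnitAddCircle.coe_toIocMod x z,
      left_le_toIcoMod _ _ _, h, toIocMod_le_right _ _ _⟩

/-- Every cyclically ordered triple has lifts with the first one in `[0, 1)`, so the relation is
the image of a compact subset of `ℝ³`. -/
theorem isClosed_setOf_circBtw : IsClosed {p : 𝕋 × 𝕋 × 𝕋 | CircBtw p.1 p.2.1 p.2.2} := by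
  let C : Set (ℝ × ℝ × ℝ) :=
    Icc (0, 0, 0) (1, 2, 2) ∩ {q | q.1 ≤ q.2.1 ∧ q.2.1 ≤ q.2.2 ∧ q.2.2 ≤ q.1 + 1}
  have hC : IsCompact C := isCompact_Icc.inter_right <| by
    simp only [ofPred_and]
    refine .inter (isClosed_le ?_ ?_) (.inter (isClosed_le ?_ ?_) (isClosed_le ?_ ?_)) <;> fun_prop
  let π : ℝ → 𝕋 := (↑)
  convert (hC.image (f := Prod.map π (Prod.map π π)) (by fun_prop)).isClosed
  ext ⟨a, b, c⟩
  constructor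
  · rintro ⟨x, y, z, rfl, rfl, rfl, hxy, hyz, hzx⟩
    have h₀ := Int.floor_le x
    have h₁ := Int.lt_floor_add_one x
    refine ⟨(x - ⌊x⌋, y - ⌊x⌋, z - ⌊x⌋), ⟨⟨?_, ?_⟩, ?_⟩, ?_⟩
    · simp only [Prod.mk_le_mk]; refine ⟨?_, ?_, ?_⟩ <;> linarith
    · simp only [Prod.mk_le_mk]; refine ⟨?_, ?_, ?_⟩ <;> linarith
    · simp only [mem_ofPred_eq]; refine ⟨?_, ?_, ?_⟩ <;> linarith
    · simp only [Prod.map, Prod.mk.injEq]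
      refine ⟨?_, ?_, ?_⟩ <;> exact UnitAddCircle.coe_eq_coe_iff.2 ⟨⌊x⌋, by ring⟩
  · rintro ⟨⟨x, y, z⟩, ⟨-, h⟩, he⟩
    simp only [Prod.map, Prod.mk.injEq] at he
    obtain ⟨rfl, rfl, rfl⟩ := he
    exact ⟨x, y, z, rfl, rfl, rfl, h⟩

theorem abs_sub_lt_of_floor_mul_eq {a b t : ℝ} (ht : 0 < t) (h : ⌊t * a⌋ = ⌊t * b⌋) :
    |a - b| < 1 / t := by
  have := Int.abs_sub_lt_one_of_floor_eq_floor h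
  rw [← mul_sub, abs_mul, abs_of_pos ht] at this
  rw [lt_div_iff₀ ht]
  linarith

theorem dist_coe_lt_of_floor_mul_fract_eq {a b : ℝ} {n : ℕ}
    (h : ⌊(n + 1) * Int.fract a⌋ = ⌊(n + 1) * Int.fract b⌋) :
    dist (a : 𝕋) (b : 𝕋) < 1 / (n + 1) := by
  have hfract : ∀ x : ℝ, ((Int.fract x : ℝ) : 𝕋) = x := fun x =>
    UnitAddCircle.coe_eq_coe_iff.2 ⟨⌊x⌋, by rw [Int.fract]; ring⟩
  rw [← hfract a, ← hfract b]
  exact (UnitAddCircle.dist_coe_le _ _).trans_lt (abs_sub_lt_of_floor_mul_eq (by positivity) h)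

theorem floor_mul_fract_neg {x : ℝ} (hx : Irrational x) (n : ℕ) :
    ⌊(n + 1) * Int.fract (-x)⌋ = n - ⌊(n + 1) * Int.fract x⌋ := by
  have hfract : Int.fract x ≠ 0 := by
    rw [Int.fract, sub_ne_zero]; exact hx.ne_int _
  set t := (n + 1 : ℝ) * Int.fract x
  have ht : t ≠ ⌊t⌋ := by
    refine Irrational.ne_int ?_ _
    simpa only [t, Int.fract, Nat.cast_succ] using
      (hx.sub_intCast ⌊x⌋).natCast_mul (m := n + 1) n.succ_ne_zero
  have h₁ : (⌊t⌋ : ℝ) < t := lt_of_le_of_ne (Int.floor_le t) (Ne.symm ht)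
  have h₂ := Int.lt_floor_add_one t
  rw [Int.fract_neg hfract, Int.floor_eq_iff]
  push_cast
  constructor <;> nlinarith

theorem card_filter_floor_lt_floor {u : ℕ → ℝ} (hu : Monotone u) (hstep : ∀ i, u (i + 1) < u i + 1)
    (N : ℕ) :
    (((Finset.range N).filter fun i => ⌊u i⌋ < ⌊u (i + 1)⌋).card : ℤ) = ⌊u N⌋ - ⌊u 0⌋ := by
  rw [Finset.natCast_card_filter, ← Finset.sum_range_sub (fun i => ⌊u i⌋)]
  refine Finset.sum_congr rfl fun i _ => ?_
  have h₁ : ⌊u i⌋ ≤ ⌊u (i + 1)⌋ := Int.floor_le_floor (hu i.le_succ)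
  have h₂ : ⌊u (i + 1)⌋ ≤ ⌊u i⌋ + 1 := by
    rw [← Int.floor_add_one]; exact Int.floor_le_floor (hstep i).le
  split_ifs <;> omega

namespace CircleDeg1Lift

variable (f : CircleDeg1Lift)

theorem iterate_ne_add_int (hf : Irrational f.translationNumber) {n : ℕ} (hn : 0 < n) (x : ℝ)
    (m : ℤ) : f^[n] x ≠ x + m := fun h => by
  have hτ := f.translationNumber_of_map_pow_eq_add_int (by rwa [coe_pow]) hn
  exact hf ⟨m / n, by rw [hτ]; push_cast; rfl⟩

theorem injective_coe_iterate (hf : Irrational f.translationNumber) (x : ℝ) :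
    Function.Injective fun n : ℕ => ((f^[n] x : ℝ) : 𝕋) := by
  intro i j h
  by_contra hne
  wlog hij : i < j generalizing i j
  · exact this h.symm (Ne.symm hne) (lt_of_le_of_ne (not_lt.1 hij) (Ne.symm hne))
  obtain ⟨m, hm⟩ := UnitAddCircle.coe_eq_coe_iff.1 h
  refine f.iterate_ne_add_int hf (Nat.sub_pos_of_lt hij) (f^[i] x) m ?_
  rwa [← Function.iterate_add_apply, Nat.sub_add_cancel hij.le]

theorem floor_iterate_sub_eq (hf : Irrational f.translationNumber) (n : ℕ) (x : ℝ) :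
    ⌊f^[n] x - x⌋ = ⌊n * f.translationNumber⌋ := by
  rcases n.eq_zero_or_pos with rfl | hn
  · simp
  have h₁ := (f ^ n).floor_sub_le_translationNumber x
  have h₂ := (f ^ n).translationNumber_le_ceil_sub x
  rw [translationNumber_pow, coe_pow] at h₁ h₂
  have h₃ : (⌈f^[n] x - x⌉ : ℝ) ≤ ⌊f^[n] x - x⌋ + 1 := by
    exact_mod_cast Int.ceil_le_floor_add_one _
  have h₄ := (hf.natCast_mul hn.ne').ne_int (⌊f^[n] x - x⌋ + 1)
  push_cast at h₄
  exact (Int.floor_eq_iff.2 ⟨h₁, lt_of_le_of_ne (h₂.trans h₃) h₄⟩).symm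

theorem lt_map_and_map_lt_add_one (h₀ : 0 < f.translationNumber)
    (h₁ : f.translationNumber < 1) (x : ℝ) : x < f x ∧ f x < x + 1 :=
  ⟨by simpa using f.lt_map_of_int_lt_translationNumber (n := 0) (by simpa using h₀) x,
    by simpa using f.map_lt_of_translationNumber_lt_int (n := 1) (by simpa using h₁) x⟩

variable {f}

theorem btw_coe_iterate_iff (h₀ : 0 < f.translationNumber) (h₁ : f.translationNumber < 1)
    (hf : Irrational f.translationNumber) (x : ℝ) (i : ℕ) :
    btw ((f^[i + 1] x : ℝ) : 𝕋) (x : 𝕋) ((f^[i + 2] x : ℝ) : 𝕋) ↔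
      ⌊f^[i + 1] x - x⌋ < ⌊f^[i + 2] x - x⌋ := by
  set y := f^[i + 1] x
  have hy : f^[i + 2] x = f y := Function.iterate_succ_apply' f (i + 1) x
  obtain ⟨hy_lt, hy_gt⟩ := f.lt_map_and_map_lt_add_one h₀ h₁ y
  have hy_ne : ∀ m : ℤ, y - x ≠ m := fun m h =>
    f.iterate_ne_add_int hf (i.succ_pos) x m (by linarith)
  rw [hy, UnitAddCircle.btw_coe_iff_exists_int hy_lt hy_gt]
  constructor
  · rintro ⟨k, hk₁, hk₂⟩
    calc ⌊y - x⌋ < k := Int.floor_lt.2 (lt_of_le_of_ne (by linarith) (hy_ne k))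
      _ ≤ ⌊f y - x⌋ := Int.le_floor.2 (by linarith)
  · intro h
    have h₁ : ((⌊y - x⌋ + 1 : ℤ) : ℝ) ≤ ⌊f y - x⌋ := by exact_mod_cast h
    have h₂ := Int.lt_floor_add_one (y - x)
    have h₃ := Int.floor_le (f y - x)
    push_cast at h₁
    exact ⟨⌊f y - x⌋, by linarith, by linarith⟩

theorem crossCount_coe_iterate (h₀ : 0 < f.translationNumber) (h₁ : f.translationNumber < 1)
    (hf : Irrational f.translationNumber) (x : ℝ) (N : ℕ) :
    (crossCount (fun n => ((f^[n] x : ℝ) : 𝕋)) N : ℤ) = ⌊(N + 1) * f.translationNumber⌋ := by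
  have hstep := f.lt_map_and_map_lt_add_one h₀ h₁
  have hcount := card_filter_floor_lt_floor (u := fun i => f^[i + 1] x - x)
    (monotone_nat_of_le_succ fun i => by
      simp only [Function.iterate_succ_apply' f (i + 1)]; linarith [hstep (f^[i + 1] x)])
    (fun i => by simp only [Function.iterate_succ_apply' f (i + 1)]; linarith [hstep (f^[i + 1] x)])
    N
  have hfloor₀ : ⌊f x - x⌋ = 0 := by
    rw [Int.floor_eq_zero_iff]; constructor <;> linarith [hstep x]
  classical
  rw [crossCount_eq_card_filter fun i _ => btw_coe_iterate_iff h₀ h₁ hf x i]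
  refine hcount.trans ?_
  rw [zero_add, Function.iterate_one, hfloor₀, f.floor_iterate_sub_eq hf]
  push_cast
  ring

end CircleDeg1Lift

namespace DenjoySystem

variable (D : DenjoySystem)

def toLift : CircleDeg1Lift := ⟨⟨D.lift, D.lift_mono.monotone⟩, D.lift_add⟩

def normalizedLift : CircleDeg1Lift :=
  ↑(CircleDeg1Lift.translate (Multiplicative.ofAdd (-⌊D.rot⌋ : ℝ))) * D.toLift

theorem normalizedLift_apply (x : ℝ) : D.normalizedLift x = -⌊D.rot⌋ + D.lift x := rfl

theorem translationNumber_normalizedLift :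
    D.normalizedLift.translationNumber = Int.fract D.rot := by
  have hcomm : Commute (↑(CircleDeg1Lift.translate (Multiplicative.ofAdd (-⌊D.rot⌋ : ℝ))))
      D.toLift := by
    rw [CircleDeg1Lift.commute_iff_commute]
    intro y
    simp only [CircleDeg1Lift.translate_apply, toLift]
    exact_mod_cast (D.toLift.map_int_add (-⌊D.rot⌋) y).symm
  rw [normalizedLift, CircleDeg1Lift.translationNumber_mul_of_commute hcomm,
    CircleDeg1Lift.translationNumber_translate,
    D.toLift.translationNumber_eq_of_tendsto₀ D.rot_lim, Int.fract]
  ring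

theorem coe_normalizedLift_iterate (x : ℝ) (n : ℕ) :
    ((D.normalizedLift^[n] x : ℝ) : 𝕋) = D.h^[n] (x : 𝕋) := by
  induction n with
  | zero => rfl
  | succ n ih =>
    rw [Function.iterate_succ_apply', Function.iterate_succ_apply', ← ih, ← D.lift_proj,
      normalizedLift_apply]
    exact UnitAddCircle.coe_eq_coe_iff.2 ⟨⌊D.rot⌋, by ring⟩

theorem fract_rot_pos : 0 < Int.fract D.rot :=
  Int.fract_pos.2 (D.rot_irr.ne_int _)

theorem irrational_fract_rot : Irrational (Int.fract D.rot) :=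
  D.rot_irr.sub_intCast _

theorem injective_iterate (x : 𝕋) : Function.Injective fun n : ℕ => D.h^[n] x := by
  induction x using QuotientAddGroup.induction_on with | H x => ?_
  simp_rw [← D.coe_normalizedLift_iterate]
  exact D.normalizedLift.injective_coe_iterate
    (D.translationNumber_normalizedLift ▸ D.irrational_fract_rot) x

theorem crossCount_iterate (x : 𝕋) (N : ℕ) :
    (crossCount (fun n => D.h^[n] x) N : ℤ) = ⌊(N + 1) * Int.fract D.rot⌋ := by
  induction x using QuotientAddGroup.induction_on with | H x => ?_
  simp_rw [← D.coe_normalizedLift_iterate, ← D.translationNumber_normalizedLift]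
  have hτ := D.translationNumber_normalizedLift
  exact CircleDeg1Lift.crossCount_coe_iterate (hτ ▸ D.fract_rot_pos)
    (hτ ▸ Int.fract_lt_one _) (hτ ▸ D.irrational_fract_rot) x N

theorem mapsTo_h : MapsTo D.h D.K D.K := fun _ hx => D.K_inv ▸ mem_image_of_mem _ hx

end DenjoySystem

namespace WDS

section Topology

variable {M : Type*} [TopologicalSpace M] {f : M → M} (W : WDS M f)

def orbit (x : W.K) (n : ℕ) : W.K := ⟨W.h^[n] x, W.mapsTo_h.iterate n x.2⟩

theorem j_orbit (x : W.K) (n : ℕ) : W.j (W.orbit x n) = f^[n] (W.j x) := by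
  induction n with
  | zero => rfl
  | succ n ih =>
    rw [Function.iterate_succ_apply', ← ih]
    exact W.equivar _ _ (Function.iterate_succ_apply' W.h n x).symm

theorem isCompact_range_j : IsCompact (range W.j) :=
  have := isCompact_iff_compactSpace.mp W.K_cpt
  isCompact_range W.j_emb.continuous

theorem mk_mem_orderGraph_iff {a b c : W.K} :
    (W.j a, W.j b, W.j c) ∈ W.orderGraph ↔ btw (a : 𝕋) b c := by
  rw [← circBtw_iff_btw]
  constructor
  · rintro ⟨a', b', c', h, he⟩
    simp only [Prod.mk.injEq, W.j_emb.injective.eq_iff] at he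
    obtain ⟨rfl, rfl, rfl⟩ := he
    exact h
  · exact fun h => ⟨a, b, c, h, rfl⟩

theorem mk_mem_revGraph_iff {a b c : W.K} :
    (W.j c, W.j b, W.j a) ∈ W.revGraph ↔ btw (a : 𝕋) b c :=
  W.mk_mem_orderGraph_iff

theorem orderGraph_nonempty : W.orderGraph.Nonempty :=
  let x : W.K := ⟨_, W.K_ne.some_mem⟩
  ⟨_, W.mk_mem_orderGraph_iff.2 (btw_rfl (a := (x : 𝕋)))⟩

theorem revGraph_nonempty : W.revGraph.Nonempty :=
  let x : W.K := ⟨_, W.K_ne.some_mem⟩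
  ⟨_, W.mk_mem_revGraph_iff.2 (btw_rfl (a := (x : 𝕋)))⟩

theorem isCompact_orderGraph : IsCompact W.orderGraph := by
  have := isCompact_iff_compactSpace.mp W.K_cpt
  have hclosed : IsClosed {t : W.K × W.K × W.K | CircBtw t.1 t.2.1 t.2.2} :=
    isClosed_setOf_circBtw.preimage
      (f := fun t : W.K × W.K × W.K => ((t.1 : 𝕋), (t.2.1 : 𝕋), (t.2.2 : 𝕋))) (by fun_prop)
  have hj := W.j_emb.continuous
  convert hclosed.isCompact.image (f := fun t => (W.j t.1, W.j t.2.1, W.j t.2.2)) (by fun_prop)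
  ext p
  constructor
  · rintro ⟨a, b, c, h, rfl⟩
    exact ⟨(a, b, c), h, rfl⟩
  · rintro ⟨⟨a, b, c⟩, h, rfl⟩
    exact ⟨a, b, c, h, rfl⟩

theorem isCompact_revGraph : IsCompact W.revGraph := by
  have hrev : Function.Involutive fun p : M × M × M => (p.2.2, p.2.1, p.1) := fun _ => rfl
  have : W.revGraph = (fun p : M × M × M => (p.2.2, p.2.1, p.1)) '' W.orderGraph := by
    rw [hrev.image_eq_preimage_symm]
    rfl
  rw [this]
  exact W.isCompact_orderGraph.image (by fun_prop)

end Topology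

section Metric

open Metric

variable {M : Type*} [MetricSpace M] {f : M → M} (W : WDS M f)

theorem exists_pos_btw_of_infDist_lt (x : W.K) (N : ℕ) :
    ∃ r > 0, ∀ a ≤ N, ∀ b ≤ N, ∀ c ≤ N,
      infDist (W.j (W.orbit x a), W.j (W.orbit x b), W.j (W.orbit x c)) W.orderGraph < r →
        btw (W.orbit x a : 𝕋) (W.orbit x b) (W.orbit x c) := by
  let T := Finset.range (N + 1) ×ˢ Finset.range (N + 1) ×ˢ Finset.range (N + 1)
  have hT : ∀ t ∈ T, ∀ᶠ r in 𝓝[>] (0 : ℝ),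
      infDist (W.j (W.orbit x t.1), W.j (W.orbit x t.2.1), W.j (W.orbit x t.2.2)) W.orderGraph
        < r → btw (W.orbit x t.1 : 𝕋) (W.orbit x t.2.1) (W.orbit x t.2.2) := fun t _ => by
    by_cases ht : btw (W.orbit x t.1 : 𝕋) (W.orbit x t.2.1) (W.orbit x t.2.2)
    · exact Eventually.of_forall fun _ _ => ht
    have hpos := (W.isCompact_orderGraph.isClosed.notMem_iff_infDist_pos
      W.orderGraph_nonempty).1 (mt W.mk_mem_orderGraph_iff.1 ht)
    exact ((eventually_lt_nhds hpos).filter_mono nhdsWithin_le_nhds).mono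
      fun r hr h => absurd (h.trans hr) (lt_irrefl _)
  obtain ⟨r, hr, hr₀⟩ := (((Filter.eventually_all_finset T).2 hT).and self_mem_nhdsWithin).exists
  refine ⟨r, hr₀, fun a ha b hb c hc => hr (a, b, c) ?_⟩
  simp only [T, Finset.mem_product, Finset.mem_range]
  omega

theorem exists_orbit_near (hf : Continuous f) (x : W.K) (N : ℕ) {η : ℝ} (hη : 0 < η) :
    ∃ δ > 0, ∀ W₁ : WDS M f, hausdorffDist (range W₁.j) (range W.j) < δ →
      ∃ y : W₁.K, ∀ n ≤ N, dist (W₁.j (W₁.orbit y n)) (W.j (W.orbit x n)) < η := by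
  have hnear : ∀ᶠ z in 𝓝 (W.j x), ∀ n ∈ Finset.range (N + 1),
      dist (f^[n] z) (f^[n] (W.j x)) < η :=
    (Filter.eventually_all_finset _).2 fun n _ =>
      (hf.iterate n).continuousAt (Metric.ball_mem_nhds _ hη)
  obtain ⟨δ, hδ, hδnear⟩ := Metric.eventually_nhds_iff.1 hnear
  refine ⟨δ, hδ, fun W₁ hW₁ => ?_⟩
  have := W.K_ne.to_subtype
  have := W₁.K_ne.to_subtype
  obtain ⟨_, ⟨y, rfl⟩, hy⟩ := Metric.exists_dist_lt_of_hausdorffDist_lt' (mem_range_self x) hW₁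
    (hausdorffEDist_ne_top_of_nonempty_of_bounded (range_nonempty _) (range_nonempty _)
      W₁.isCompact_range_j.isBounded W.isCompact_range_j.isBounded)
  refine ⟨y, fun n hn => ?_⟩
  rw [j_orbit, j_orbit]
  exact hδnear hy n (Finset.mem_range.2 (by omega))

/-- `S` stands for the order graph of `W₁` or for its reverse. -/
theorem exists_btw_of_mem_of_hausdorffDist_lt (hf : Continuous f) (x : W.K) (N : ℕ) :
    ∃ δ > 0, ∀ W₁ : WDS M f, hausdorffDist (range W₁.j) (range W.j) < δ → ∃ y : W₁.K,
      ∀ S : Set (M × M × M), IsCompact S → S.Nonempty → hausdorffDist S W.orderGraph < δ →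
      ∀ a ≤ N, ∀ b ≤ N, ∀ c ≤ N,
        (W₁.j (W₁.orbit y a), W₁.j (W₁.orbit y b), W₁.j (W₁.orbit y c)) ∈ S →
          btw (W.orbit x a : 𝕋) (W.orbit x b) (W.orbit x c) := by
  obtain ⟨r, hr, hbtw⟩ := W.exists_pos_btw_of_infDist_lt x N
  obtain ⟨δ, hδ, hnear⟩ := W.exists_orbit_near hf x N (half_pos hr)
  refine ⟨min δ (r / 2), lt_min hδ (half_pos hr), fun W₁ hW₁ => ?_⟩
  obtain ⟨y, hy⟩ := hnear W₁ (hW₁.trans_le (min_le_left _ _))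
  refine ⟨y, fun S hS hSne hSG a ha b hb c hc hmem => hbtw a ha b hb c hc ?_⟩
  set P := (W.j (W.orbit x a), W.j (W.orbit x b), W.j (W.orbit x c))
  set Q := (W₁.j (W₁.orbit y a), W₁.j (W₁.orbit y b), W₁.j (W₁.orbit y c))
  have hPQ : dist P Q < r / 2 := by
    simp only [P, Q, Prod.dist_eq, dist_comm (W.j _)]
    exact max_lt (hy a ha) (max_lt (hy b hb) (hy c hc))
  have hfin := hausdorffEDist_ne_top_of_nonempty_of_bounded hSne W.orderGraph_nonempty
    hS.isBounded W.isCompact_orderGraph.isBounded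
  calc infDist P W.orderGraph ≤ infDist Q W.orderGraph + dist P Q := infDist_le_infDist_add_dist
    _ ≤ infDist Q S + hausdorffDist S W.orderGraph + dist P Q := by
        gcongr; exact infDist_le_infDist_add_hausdorffDist hfin
    _ < 0 + r / 2 + r / 2 := by
        rw [infDist_zero_of_mem hmem]
        gcongr
        exact hSG.trans_le (min_le_right _ _)
    _ = r := by ring

end Metric

end WDS

/-- The rotation number of a weak Denjoy sub-system depends continuously (up to sign)
on the WDS, for the topology given by the Hausdorff distance on the images and on the
order graphs. -/
theorem rotation_number_continuous
    {M : Type*} [MetricSpace M] (f : M → M) (hf : IsHomeomorph f)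
    (W : WDS M f) :
    ∀ ε > (0 : ℝ), ∃ δ > (0 : ℝ), ∀ W₁ : WDS M f,
      Metric.hausdorffDist (Set.range W₁.j) (Set.range W.j) < δ →
      (Metric.hausdorffDist W₁.orderGraph W.orderGraph < δ ∨
        Metric.hausdorffDist W₁.revGraph W.orderGraph < δ) →
      (dist (W₁.rot : UnitAddCircle) (W.rot : UnitAddCircle) < ε ∨
        dist (W₁.rot : UnitAddCircle) (-(W.rot : UnitAddCircle)) < ε) := by
  intro ε hε
  obtain ⟨N, hN⟩ := exists_nat_one_div_lt hε
  obtain ⟨x, hx⟩ := W.K_ne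
  obtain ⟨δ, hδ, htransfer⟩ :=
    W.exists_btw_of_mem_of_hausdorffDist_lt hf.continuous ⟨x, hx⟩ (N + 1)
  refine ⟨δ, hδ, fun W₁ hrange hgraph => ?_⟩
  obtain ⟨y, hy⟩ := htransfer W₁ hrange
  have hW := W.crossCount_iterate x N
  have hW₁ := W₁.crossCount_iterate y N
  rcases hgraph with hG | hG
  · have hcount : crossCount (fun n => W₁.h^[n] (y : 𝕋)) N = crossCount (fun n => W.h^[n] x) N :=
      crossCount_eq_of_btw_imp (W.injective_iterate x) fun a ha b hb c hc habc =>
        hy _ W₁.isCompact_orderGraph W₁.orderGraph_nonempty hG a ha b hb c hc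
          (W₁.mk_mem_orderGraph_iff.2 habc)
    refine Or.inl ((dist_coe_lt_of_floor_mul_fract_eq ?_).trans hN)
    rw [← hW, ← hW₁, hcount]
  · have hcount :
        crossCount (fun n => W₁.h^[n] (y : 𝕋)) N + crossCount (fun n => W.h^[n] x) N = N :=
      crossCount_add_crossCount_of_btw_imp_swap (W.injective_iterate x) fun a ha b hb c hc habc =>
        hy _ W₁.isCompact_revGraph W₁.revGraph_nonempty hG c hc b hb a ha
          (W₁.mk_mem_revGraph_iff.2 habc)
    rw [← AddCircle.coe_neg]
    refine Or.inr ((dist_coe_lt_of_floor_mul_fract_eq ?_).trans hN)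
    rw [floor_mul_fract_neg W.rot_irr, ← hW, ← hW₁]
    omega
end
end

section
/- Let h be a Denjoy example with minimal set C ⊆ 𝕋 and irrational rotation number, and assume that the complement 𝕋 \ C is the h-orbit of a single connected component: there is a connected component I of 𝕋 \ C such that 𝕋 \ C = ⋃_{n∈ℤ} hⁿ(I). Let I₀ and I₁ be two disjoint closed arcs of 𝕋 with C ⊆ I₀ ∪ I₁, such that each I_j has one endpoint in I and the other endpoint in h(I), and I₀ joins I to h(I) in the positive direction. Define ℓ : C → Σ₂ by ℓ(θ)(k) = j where hᵏ(θ) ∈ I_j (this is well defined since C ⊆ I₀ ∪ I₁ and I₀ ∩ I₁ = ∅). Then ℓ is continuous and injective, hence a homeomorphism onto its image, and ℓ(h(θ)) = σ(ℓ(θ)) for all θ ∈ C. -/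
open Filter Topology Set

noncomputable section

/-- The shift on the space `Σ₂ = {0,1}^ℤ` of two-sided binary sequences. -/
def shift2 (u : ℤ → Fin 2) : ℤ → Fin 2 := fun k => u (k + 1)

/-!
Continuity holds because the `k`-th symbol of `ℓ θ` records which of two disjoint closed arcs
contains `hᵏ θ`. For injectivity, let `x ≠ y` in `C` have the same itinerary. For each `k` the points
`hᵏ x, hᵏ y` lie in the interior of a common arc `I_j`, whose complementary arc joins the gaps `I`
and `h(I)`; so these two gaps lie on the same side of the pair `hᵏ x, hᵏ y`. As `h` preserves the
cyclic order, whether the gap `hⁿ(I)` lies in the open arc from `x` to `y` is then independent of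
`n`. Up to swapping `x` and `y` it does, so all gaps lie in that arc and the opposite open arc is
contained in the totally disconnected set `C` (`D.K` below), which is absurd.
-/

namespace UnitAddCircle

lemma coe_ne_coe_of_lt_of_lt {a b : ℝ} (hab : a < b) (hba : b < a + 1) :
    (a : UnitAddCircle) ≠ b := by
  rw [Ne, AddCircle.coe_eq_coe_iff_of_mem_Ico (a := a) ⟨le_rfl, by linarith⟩ ⟨hab.le, hba⟩]
  exact hab.ne

lemma exists_int_eq_add_of_coe_eq {a b : ℝ} (h : (a : UnitAddCircle) = b) :
    ∃ m : ℤ, b = a + m := by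
  obtain ⟨m, hm⟩ := AddSubgroup.mem_zmultiples_iff.1 (QuotientAddGroup.eq.1 h)
  exact ⟨m, by rw [zsmul_one] at hm; linarith⟩

lemma exists_mem_Ico_coe_eq (p : ℝ) (z : UnitAddCircle) :
    ∃ r ∈ Ico p (p + 1), (r : UnitAddCircle) = z :=
  ⟨_, (AddCircle.equivIco 1 p z).2, AddCircle.coe_equivIco⟩

lemma exists_coe_eq_coe_eq (x y : UnitAddCircle) :
    ∃ p q : ℝ, (p : UnitAddCircle) = x ∧ (q : UnitAddCircle) = y ∧ p ≤ q ∧ q < p + 1 := by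
  obtain ⟨p, rfl⟩ := QuotientAddGroup.mk_surjective x
  obtain ⟨q, ⟨hpq, hqp⟩, rfl⟩ := exists_mem_Ico_coe_eq p y
  exact ⟨p, q, rfl, rfl, hpq, hqp⟩

lemma disjoint_image_coe {S S' : Set ℝ} (h : ∀ a ∈ S, ∀ b ∈ S', a < b ∧ b < a + 1) :
    Disjoint (((↑) : ℝ → UnitAddCircle) '' S) ((↑) '' S') := by
  rw [disjoint_left]
  rintro _ ⟨a, ha, rfl⟩ ⟨b, hb, hba⟩
  exact coe_ne_coe_of_lt_of_lt (h a ha b hb).1 (h a ha b hb).2 hba.symm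

/-- The open arc from `x` to `y` in the positive direction (empty if `x = y`). -/
def openArc (x y : UnitAddCircle) : Set UnitAddCircle :=
  {z | ∃ p q : ℝ, (p : UnitAddCircle) = x ∧ (q : UnitAddCircle) = y ∧ q < p + 1 ∧
    z ∈ ((↑) : ℝ → UnitAddCircle) '' Ioo p q}

lemma openArc_coe {p q : ℝ} (hpq : p ≤ q) (hqp : q < p + 1) :
    openArc p q = ((↑) : ℝ → UnitAddCircle) '' Ioo p q := by
  refine Subset.antisymm ?_ fun z hz => ⟨p, q, rfl, rfl, hqp, hz⟩
  rintro _ ⟨p', q', hp', hq', hqp', r, ⟨hpr, hrq⟩, rfl⟩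
  obtain ⟨m, rfl⟩ := exists_int_eq_add_of_coe_eq hp'.symm
  have hq : q' - m = q := by
    refine (AddCircle.coe_eq_coe_iff_of_mem_Ico (a := p) ⟨by linarith, by linarith⟩
      ⟨hpq, hqp⟩).1 ?_
    rw [← hq', ← sub_eq_zero, ← AddCircle.coe_sub]
    simp
  exact ⟨r - m, ⟨by linarith, by linarith⟩, by simp⟩

lemma openArc_coe_swap {p q : ℝ} (hpq : p < q) (hqp : q < p + 1) :
    openArc q p = ((↑) : ℝ → UnitAddCircle) '' Ioo q (p + 1) := by
  rw [← openArc_coe (by linarith) (by linarith), AddCircle.coe_add_period]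

lemma isOpen_openArc (x y : UnitAddCircle) : IsOpen (openArc x y) := by
  obtain ⟨p, q, rfl, rfl, hpq, hqp⟩ := exists_coe_eq_coe_eq x y
  rw [openArc_coe hpq hqp]
  exact QuotientAddGroup.isOpenMap_coe _ isOpen_Ioo

lemma isPreconnected_openArc (x y : UnitAddCircle) : IsPreconnected (openArc x y) := by
  obtain ⟨p, q, rfl, rfl, hpq, hqp⟩ := exists_coe_eq_coe_eq x y
  rw [openArc_coe hpq hqp]
  exact isPreconnected_Ioo.image _ QuotientAddGroup.continuous_mk.continuousOn

lemma openArc_nontrivial {x y : UnitAddCircle} (hxy : x ≠ y) : (openArc x y).Nontrivial := by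
  obtain ⟨p, q, rfl, rfl, hpq, hqp⟩ := exists_coe_eq_coe_eq x y
  have hlt : p < q := hpq.lt_of_ne (by rintro rfl; exact hxy rfl)
  rw [openArc_coe hpq hqp]
  exact ⟨_, ⟨p + (q - p) / 3, ⟨by linarith, by linarith⟩, rfl⟩,
    _, ⟨p + 2 * (q - p) / 3, ⟨by linarith, by linarith⟩, rfl⟩,
    coe_ne_coe_of_lt_of_lt (by linarith) (by linarith)⟩

lemma disjoint_openArc (x y : UnitAddCircle) : Disjoint (openArc x y) (openArc y x) := by
  obtain ⟨p, q, rfl, rfl, hpq, hqp⟩ := exists_coe_eq_coe_eq x y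
  rcases hpq.eq_or_lt with rfl | hpq
  · simp [openArc_coe le_rfl hqp]
  rw [openArc_coe hpq.le hqp, openArc_coe_swap hpq hqp]
  exact disjoint_image_coe fun a ha b hb => ⟨by linarith [ha.2, hb.1], by linarith [ha.1, hb.2]⟩

lemma mem_openArc_union {x y z : UnitAddCircle} (hxy : x ≠ y) (hzx : z ≠ x) (hzy : z ≠ y) :
    z ∈ openArc x y ∪ openArc y x := by
  obtain ⟨p, q, rfl, rfl, hpq, hqp⟩ := exists_coe_eq_coe_eq x y
  obtain ⟨r, ⟨hpr, hrp⟩, rfl⟩ := exists_mem_Ico_coe_eq p z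
  have hpq' : p < q := hpq.lt_of_ne (by rintro rfl; exact hxy rfl)
  have hpr' : p < r := hpr.lt_of_ne (by rintro rfl; exact hzx rfl)
  rw [openArc_coe hpq hqp, openArc_coe_swap hpq' hqp]
  rcases lt_trichotomy r q with hrq | rfl | hqr
  · exact Or.inl (mem_image_of_mem _ ⟨hpr', hrq⟩)
  · exact absurd rfl hzy
  · exact Or.inr (mem_image_of_mem _ ⟨hqr, hrp⟩)

lemma _root_.IsPreconnected.subset_openArc_or {S : Set UnitAddCircle} (hS : IsPreconnected S)
    {x y : UnitAddCircle} (hxy : x ≠ y) (hx : x ∉ S) (hy : y ∉ S) :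
    S ⊆ openArc x y ∨ S ⊆ openArc y x :=
  hS.subset_or_subset (isOpen_openArc x y) (isOpen_openArc y x) (disjoint_openArc x y)
    fun _ hz => mem_openArc_union hxy (ne_of_mem_of_not_mem hz hx) (ne_of_mem_of_not_mem hz hy)

def arcPreserving : Subgroup (Equiv.Perm UnitAddCircle) where
  carrier := {e | ∀ x y, e '' openArc x y = openArc (e x) (e y)}
  one_mem' _ _ := image_id _
  mul_mem' {e f} he hf x y := by
    rw [Equiv.Perm.coe_mul, image_comp, hf, he]
    rfl
  inv_mem' {e} he x y := by
    have h := he (e⁻¹ x) (e⁻¹ y)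
    simp only [Equiv.Perm.inv_def, Equiv.apply_symm_apply] at h ⊢
    rw [← h, e.symm_image_image]

lemma image_openArc {e : Equiv.Perm UnitAddCircle} (he : e ∈ arcPreserving) (x y : UnitAddCircle) :
    e '' openArc x y = openArc (e x) (e y) :=
  he x y

lemma mem_arcPreserving_of_lift {e : Equiv.Perm UnitAddCircle} {F : ℝ → ℝ} (hF : StrictMono F)
    (hF_surj : Function.Surjective F) (hF_add : ∀ x, F (x + 1) = F x + 1)
    (heF : ∀ x : ℝ, (F x : UnitAddCircle) = e x) : e ∈ arcPreserving := by
  intro x y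
  obtain ⟨p, q, rfl, rfl, hpq, hqp⟩ := exists_coe_eq_coe_eq x y
  have hF_Ioo : F '' Ioo p q = Ioo (F p) (F q) :=
    (hF.orderIsoOfSurjective F hF_surj).image_Ioo p q
  rw [← heF, ← heF, openArc_coe hpq hqp, openArc_coe (hF.monotone hpq) (hF_add p ▸ hF hqp),
    ← hF_Ioo, image_image, image_image]
  simp only [heF]

end UnitAddCircle

open UnitAddCircle

def IsClosedArcFromTo (J G₁ G₂ : Set UnitAddCircle) : Prop :=
  ∃ s t : ℝ, s ≤ t ∧ t - s < 1 ∧ J = (fun x : ℝ => (x : UnitAddCircle)) '' Icc s t ∧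
    (s : UnitAddCircle) ∈ G₁ ∧ (t : UnitAddCircle) ∈ G₂

namespace IsClosedArcFromTo

variable {J G₁ G₂ : Set UnitAddCircle}

lemma isClosed (hJ : IsClosedArcFromTo J G₁ G₂) : IsClosed J := by
  obtain ⟨s, t, -, -, rfl, -⟩ := hJ
  exact (isCompact_Icc.image QuotientAddGroup.continuous_mk).isClosed

/-- `G₁` and `G₂` are also joined through the complementary arc `[t, s + 1]`, missing `u, v`. -/
lemma subset_openArc_iff (hJ : IsClosedArcFromTo J G₁ G₂) (h₁ : IsPreconnected G₁)
    (h₂ : IsPreconnected G₂) {u v : UnitAddCircle} (huv : u ≠ v) (hu : u ∈ J \ (G₁ ∪ G₂))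
    (hv : v ∈ J \ (G₁ ∪ G₂)) : G₁ ⊆ openArc u v ↔ G₂ ⊆ openArc u v := by
  obtain ⟨s, t, -, hts, rfl, hs, ht⟩ := hJ
  set B := ((↑) : ℝ → UnitAddCircle) '' Icc t (s + 1)
  have hsB : (s : UnitAddCircle) ∈ B := ⟨s + 1, ⟨by linarith, le_rfl⟩, AddCircle.coe_add_period 1 s⟩
  have htB : (t : UnitAddCircle) ∈ B := ⟨t, ⟨le_rfl, by linarith⟩, rfl⟩
  have hB : IsPreconnected B :=
    isPreconnected_Icc.image _ QuotientAddGroup.continuous_mk.continuousOn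
  have hG : IsPreconnected (G₁ ∪ B ∪ G₂) := (h₁.union _ hs hsB hB).union _ (Or.inr htB) ht h₂
  have hoff : ∀ w ∈ ((↑) : ℝ → UnitAddCircle) '' Icc s t \ (G₁ ∪ G₂), w ∉ G₁ ∪ B ∪ G₂ := by
    rintro _ ⟨⟨r, ⟨hsr, hrt⟩, rfl⟩, hr⟩
    have hr' : r ∈ Ioo s t := ⟨hsr.lt_of_ne (by rintro rfl; exact hr (Or.inl hs)),
      hrt.lt_of_ne (by rintro rfl; exact hr (Or.inr ht))⟩
    have hrB : (r : UnitAddCircle) ∉ B := (disjoint_image_coe fun a ha b hb =>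
      ⟨by linarith [ha.2, hb.1], by linarith [ha.1, hb.2]⟩).notMem_of_mem_left ⟨r, hr', rfl⟩
    simp_all
  rcases hG.subset_openArc_or huv (hoff u hu) (hoff v hv) with hG | hG
  · exact iff_of_true (fun z hz => hG (Or.inl (Or.inl hz))) fun z hz => hG (Or.inr hz)
  · have hvu := (disjoint_openArc v u).notMem_of_mem_left
    exact iff_of_false (fun h => hvu (hG (Or.inl (Or.inl hs))) (h hs))
      fun h => hvu (hG (Or.inr ht)) (h ht)

end IsClosedArcFromTo

lemma Fin.eq_of_mem_ite_of_mem_ite {α : Type*} {A B : Set α} (hAB : Disjoint A B) {i j : Fin 2}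
    {z : α} (hi : z ∈ if i = 0 then A else B) (hj : z ∈ if j = 0 then A else B) : i = j := by
  fin_cases i <;> fin_cases j <;> simp_all [disjoint_left]

lemma continuous_of_forall_mem_ite {X Y : Type*} [TopologicalSpace X] [TopologicalSpace Y]
    {f : X → Y} (hf : Continuous f) {A B : Set Y} (hA : IsClosed A) (hB : IsClosed B)
    (hAB : Disjoint A B) {c : X → Fin 2} (hc : ∀ x, f x ∈ if c x = 0 then A else B) :
    Continuous c := by
  have hfiber (i : Fin 2) : c ⁻¹' {i} = f ⁻¹' (if i = 0 then A else B) :=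
    ext fun x => ⟨fun hx => mem_singleton_iff.1 hx ▸ hc x,
      fun hx => Fin.eq_of_mem_ite_of_mem_ite hAB (hc x) hx⟩
  refine continuous_iff_isClosed.2 fun s _ => ?_
  rw [← biUnion_preimage_singleton]
  refine s.toFinite.isClosed_biUnion fun i _ => ?_
  rw [hfiber]
  split_ifs
  exacts [hA.preimage hf, hB.preimage hf]

lemma Homeomorph.continuous_toEquiv_zpow {X : Type*} [TopologicalSpace X] (f : X ≃ₜ X) (n : ℤ) :
    Continuous (f.toEquiv ^ n) := by
  let toPerm : (X ≃ₜ X) →* Equiv.Perm X :=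
    { toFun := Homeomorph.toEquiv, map_one' := rfl, map_mul' := fun _ _ => rfl }
  rw [← show toPerm (f ^ n) = f.toEquiv ^ n from map_zpow toPerm f n]
  exact (f ^ n).continuous

namespace DenjoySystem

variable (D : DenjoySystem)

open scoped Pointwise in
lemma zpow_apply_mem_K {x : UnitAddCircle} (hx : x ∈ D.K) (n : ℤ) : (D.h.toEquiv ^ n) x ∈ D.K := by
  have hh : D.h.toEquiv ∈ MulAction.stabilizer (Equiv.Perm UnitAddCircle) D.K := by
    rw [MulAction.mem_stabilizer_iff, ← Set.image_smul]
    exact D.K_inv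
  rw [← MulAction.mem_stabilizer_iff.1 (zpow_mem hh n)]
  exact Set.smul_mem_smul_set hx

lemma h_mem_arcPreserving : D.h.toEquiv ∈ arcPreserving :=
  mem_arcPreserving_of_lift D.lift_mono D.lift_bij.2 D.lift_add D.lift_proj

lemma not_openArc_subset_K {x y : UnitAddCircle} (hxy : x ≠ y) : ¬ openArc x y ⊆ D.K :=
  fun hsub => (openArc_nontrivial hxy).not_subsingleton (D.K_td _ hsub (isPreconnected_openArc x y))

variable {D} {I : Set UnitAddCircle}

lemma zpow_image_subset_compl (horbit : (⋃ n : ℤ, (fun y => (D.h.toEquiv ^ n) y) '' I) = D.Kᶜ)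
    (n : ℤ) : (D.h.toEquiv ^ n) '' I ⊆ D.Kᶜ :=
  horbit ▸ subset_iUnion (fun n => (fun y => (D.h.toEquiv ^ n) y) '' I) n

lemma not_forall_zpow_image_subset_openArc
    (horbit : (⋃ n : ℤ, (fun y => (D.h.toEquiv ^ n) y) '' I) = D.Kᶜ)
    {x y : UnitAddCircle} (hxy : x ≠ y) :
    ¬ ∀ n : ℤ, (D.h.toEquiv ^ n) '' I ⊆ openArc x y := fun hall =>
  D.not_openArc_subset_K hxy.symm <| (disjoint_openArc y x).subset_compl_right.trans <|
    compl_subset_comm.1 (horbit ▸ iUnion_subset hall)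

theorem eq_of_forall_mem_closedArc (hI : IsPreconnected I)
    (horbit : (⋃ n : ℤ, (fun y => (D.h.toEquiv ^ n) y) '' I) = D.Kᶜ)
    {x y : UnitAddCircle} (hx : x ∈ D.K) (hy : y ∈ D.K)
    (hJ : ∀ k : ℤ, ∃ J, (IsClosedArcFromTo J I (D.h '' I) ∨ IsClosedArcFromTo J (D.h '' I) I) ∧
      (D.h.toEquiv ^ k) x ∈ J ∧ (D.h.toEquiv ^ k) y ∈ J) :
    x = y := by
  by_contra hxy
  have hIK : I ⊆ D.Kᶜ := by simpa using zpow_image_subset_compl horbit 0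
  have hhIK : D.h '' I ⊆ D.Kᶜ := by simpa using zpow_image_subset_compl horbit 1
  wlog hIxy : I ⊆ openArc x y generalizing x y
  · refine this hy hx (fun k => (hJ k).imp fun J hJ => ⟨hJ.1, hJ.2.2, hJ.2.1⟩) (Ne.symm hxy) ?_
    exact (hI.subset_openArc_or hxy (fun h => hIK h hx) (fun h => hIK h hy)).resolve_left hIxy
  have hstep (n : ℤ) :
      (D.h.toEquiv ^ n) '' I ⊆ openArc x y ↔ (D.h.toEquiv ^ (n + 1)) '' I ⊆ openArc x y := by
    obtain ⟨J, hJarc, hxJ, hyJ⟩ := hJ (-n)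
    have hoff {z : UnitAddCircle} (hz : z ∈ D.K) : z ∉ I ∪ D.h '' I :=
      fun h => h.elim (hIK · hz) (hhIK · hz)
    set u := (D.h.toEquiv ^ (-n)) x
    set v := (D.h.toEquiv ^ (-n)) y
    have hu : u ∈ J \ (I ∪ D.h '' I) := ⟨hxJ, hoff (D.zpow_apply_mem_K hx (-n))⟩
    have hv : v ∈ J \ (I ∪ D.h '' I) := ⟨hyJ, hoff (D.zpow_apply_mem_K hy (-n))⟩
    have huv : u ≠ v := (D.h.toEquiv ^ (-n)).injective.ne hxy
    have hhI := hI.image _ D.h.continuous.continuousOn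
    have hgaps : I ⊆ openArc u v ↔ D.h '' I ⊆ openArc u v := by
      rcases hJarc with hJ | hJ
      · exact hJ.subset_openArc_iff hI hhI huv hu hv
      · rw [union_comm] at hu hv
        exact (hJ.subset_openArc_iff hhI hI huv hu hv).symm
    have htransport (S : Set UnitAddCircle) :
        S ⊆ openArc u v ↔ (D.h.toEquiv ^ n) '' S ⊆ openArc x y := by
      rw [← image_subset_image_iff (D.h.toEquiv ^ n).injective,
        image_openArc (zpow_mem D.h_mem_arcPreserving n)]
      simp [u, v, zpow_neg]
    rw [← htransport, hgaps, htransport, zpow_add_one, Equiv.Perm.coe_mul, image_comp]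
    rfl
  refine not_forall_zpow_image_subset_openArc horbit hxy fun n => ?_
  induction n using Int.induction_on with
  | zero => simpa using hIxy
  | succ n ih => exact (hstep n).1 ih
  | pred n ih => exact (hstep (-n - 1)).2 (by simpa using ih)

end DenjoySystem

theorem denjoy_coding_embedding_general
    (D : DenjoySystem)
    (I : Set UnitAddCircle) (hI : ∃ x ∈ D.Kᶜ, I = connectedComponentIn D.Kᶜ x)
    (horbit : (⋃ n : ℤ, (fun y => (D.h.toEquiv ^ n) y) '' I) = D.Kᶜ)
    (I₀ I₁ : Set UnitAddCircle)
    (hI₀ : ∃ s t : ℝ, s ≤ t ∧ t - s < 1 ∧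
      I₀ = (fun x : ℝ => (x : UnitAddCircle)) '' Set.Icc s t ∧
      (s : UnitAddCircle) ∈ I ∧ (t : UnitAddCircle) ∈ D.h '' I)
    (hI₁ : ∃ s t : ℝ, s ≤ t ∧ t - s < 1 ∧
      I₁ = (fun x : ℝ => (x : UnitAddCircle)) '' Set.Icc s t ∧
      (s : UnitAddCircle) ∈ D.h '' I ∧ (t : UnitAddCircle) ∈ I)
    (hdisj : Disjoint I₀ I₁)
    (ℓ : D.K → (ℤ → Fin 2))
    (hℓ : ∀ θ : D.K, ∀ k : ℤ,
      (D.h.toEquiv ^ k) (θ : UnitAddCircle) ∈ (if ℓ θ k = 0 then I₀ else I₁)) :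
    Continuous ℓ ∧ Function.Injective ℓ ∧ Topology.IsEmbedding ℓ ∧
      ∀ θ θ' : D.K, D.h (θ : UnitAddCircle) = (θ' : UnitAddCircle) →
        ℓ θ' = shift2 (ℓ θ) := by
  have hIpre : IsPreconnected I := by
    obtain ⟨x, -, rfl⟩ := hI
    exact isPreconnected_connectedComponentIn
  have hJ₀ : IsClosedArcFromTo I₀ I (D.h '' I) := hI₀
  have hJ₁ : IsClosedArcFromTo I₁ (D.h '' I) I := hI₁
  have hcont : Continuous ℓ := continuous_pi fun k =>
    continuous_of_forall_mem_ite
      ((Homeomorph.continuous_toEquiv_zpow D.h k).comp continuous_subtype_val)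
      hJ₀.isClosed hJ₁.isClosed hdisj fun θ => hℓ θ k
  have hinj : Function.Injective ℓ := fun θ θ' hθθ' => Subtype.ext <|
    DenjoySystem.eq_of_forall_mem_closedArc hIpre horbit θ.2 θ'.2 fun k =>
      ⟨_, by split_ifs; exacts [Or.inl hJ₀, Or.inr hJ₁], hℓ θ k, hθθ' ▸ hℓ θ' k⟩
  have : CompactSpace D.K := isCompact_iff_compactSpace.mp D.K_cpt
  refine ⟨hcont, hinj, (hcont.isClosedEmbedding hinj).isEmbedding,
    fun θ θ' hθθ' => funext fun k => Fin.eq_of_mem_ite_of_mem_ite hdisj (hℓ θ' k) ?_⟩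
  have hk : (D.h.toEquiv ^ (k + 1)) θ = (D.h.toEquiv ^ k) θ' := by
    rw [zpow_add_one, Equiv.Perm.mul_apply, ← hθθ']
    rfl
  exact hk ▸ hℓ θ (k + 1)

/-- For a Denjoy example whose complementary gaps form a single orbit, the coding of
points of the minimal set by two suitable arcs `I₀, I₁` is a continuous injective map
(hence a homeomorphism onto its image) conjugating `h` to the shift. -/
theorem denjoy_coding_embedding
    (D : DenjoySystem)
    (I : Set UnitAddCircle) (hI : ∃ x ∈ D.Kᶜ, I = connectedComponentIn D.Kᶜ x)
    (horbit : (⋃ n : ℤ, (fun y => (D.h.toEquiv ^ n) y) '' I) = D.Kᶜ)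
    (I₀ I₁ : Set UnitAddCircle)
    (hI₀ : ∃ s t : ℝ, s ≤ t ∧ t - s < 1 ∧
      I₀ = (fun x : ℝ => (x : UnitAddCircle)) '' Set.Icc s t ∧
      (s : UnitAddCircle) ∈ I ∧ (t : UnitAddCircle) ∈ D.h '' I)
    (hI₁ : ∃ s t : ℝ, s ≤ t ∧ t - s < 1 ∧
      I₁ = (fun x : ℝ => (x : UnitAddCircle)) '' Set.Icc s t ∧
      (s : UnitAddCircle) ∈ D.h '' I ∧ (t : UnitAddCircle) ∈ I)
    (hdisj : Disjoint I₀ I₁) (hcover : D.K ⊆ I₀ ∪ I₁)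
    (ℓ : D.K → (ℤ → Fin 2))
    (hℓ : ∀ θ : D.K, ∀ k : ℤ,
      (D.h.toEquiv ^ k) (θ : UnitAddCircle) ∈ (if ℓ θ k = 0 then I₀ else I₁)) :
    Continuous ℓ ∧ Function.Injective ℓ ∧ Topology.IsEmbedding ℓ ∧
      ∀ θ θ' : D.K, D.h (θ : UnitAddCircle) = (θ' : UnitAddCircle) →
        ℓ θ' = shift2 (ℓ θ) :=
  denjoy_coding_embedding_general D I hI horbit I₀ I₁ hI₀ hI₁ hdisj ℓ hℓ
end
end
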